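/- For all integers a, b, c with 0 ≤ a, b, c ≤ 5, the triangle multigraph T_{a,b,c} on three vertices, whose three vertex pairs are joined by a, b, c parallel edges respectively, has weight w(T_{a,b,c}) = 2(a + b + c) − 14. -/

import Mathlib

open Finset

/-- A loopless multigraph on vertex type `V`, given by a symmetric multiplicity function. -/
structure Multigraph (V : Type*) where
  mult : V → V → ℕ
  symm : ∀ u v, mult u v = mult v u
  loopless : ∀ v, mult v v = 0

namespace Multigraph

variable {V W : Type*}

/-- The underlying simple graph (adjacency = positive multiplicity). -/
def toSimpleGraph (G : Multigraph V) : SimpleGraph V where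
  Adj u v := 0 < G.mult u v
  symm := by
    constructor
    intro u v h
    show 0 < G.mult v u
    rwa [G.symm v u]
  loopless := by
    constructor
    intro v h
    simp [G.loopless v] at h

/-- Connectivity of a multigraph. -/
def Connected (G : Multigraph V) : Prop := G.toSimpleGraph.Connected

/-- Number of edges `e(G)`. -/
def edgeCount (G : Multigraph V) [Fintype V] : ℕ := (∑ u, ∑ v, G.mult u v) / 2

/-- `d(X)`: the number of edges with exactly one endpoint in `X`. -/
def cut (G : Multigraph V) [Fintype V] [DecidableEq V] (X : Finset V) : ℕ :=
  ∑ u ∈ X, ∑ v ∈ Xᶜ, G.mult u v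

/-- Degree of a vertex (with multiplicity). -/
def degree (G : Multigraph V) [Fintype V] (v : V) : ℕ := ∑ u, G.mult v u

/-- Number of edges of `G` with both endpoints in `A` (edges of the induced subgraph `G[A]`). -/
def edgesWithin (G : Multigraph V) (A : Finset V) : ℕ :=
  (∑ u ∈ A, ∑ v ∈ A, G.mult u v) / 2

/-- Weight of a family of parts: `Σ d(A) − 10·t + 16`. -/
def partsWeight (G : Multigraph V) [Fintype V] [DecidableEq V]
    (Ps : Finset (Finset V)) : ℤ :=
  (∑ A ∈ Ps, (G.cut A : ℤ)) - 10 * Ps.card + 16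

/-- Weight `w_G(𝒫)` of a vertex partition `𝒫`. -/
def pweight (G : Multigraph V) [Fintype V] [DecidableEq V]
    (P : Finpartition (univ : Finset V)) : ℤ :=
  G.partsWeight P.parts

/-- Weight `w_{G[A]}(Q)` of a partition `Q` of `A` in the induced subgraph `G[A]`. -/
def inducedWeight (G : Multigraph V) [DecidableEq V] (A : Finset V)
    (Q : Finpartition A) : ℤ :=
  (∑ B ∈ Q.parts, ((∑ u ∈ B, ∑ v ∈ A \ B, G.mult u v : ℕ) : ℤ))
    - 10 * Q.parts.card + 16

/-- Isomorphism of multigraphs. -/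
def Iso (G : Multigraph V) (H : Multigraph W) : Prop :=
  ∃ e : V ≃ W, ∀ u v, H.mult (e u) (e v) = G.mult u v

/-- Contraction `G/𝒫`: identify each part to a single vertex and delete loops. -/
def contract (G : Multigraph V) [Fintype V] [DecidableEq V]
    (P : Finpartition (univ : Finset V)) : Multigraph {A // A ∈ P.parts} where
  mult A B := if A = B then 0 else ∑ u ∈ A.1, ∑ v ∈ B.1, G.mult u v
  symm := by
    intro A B
    try dsimp only
    by_cases h : A = B
    · simp [h]
    · rw [if_neg h, if_neg (Ne.symm h), Finset.sum_comm]
      exact Finset.sum_congr rfl fun b _ => Finset.sum_congr rfl fun a _ => G.symm a b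
  loopless := by intro A; simp

/-- Adding one new edge between distinct existing vertices. -/
def addEdge (G : Multigraph V) [DecidableEq V] (x y : V) (hxy : x ≠ y) : Multigraph V where
  mult u v := G.mult u v + (if (u = x ∧ v = y) ∨ (u = y ∧ v = x) then 1 else 0)
  symm := by
    intro u v
    try dsimp only
    rw [G.symm u v]
    by_cases h1 : (u = x ∧ v = y) ∨ (u = y ∧ v = x)
    · rw [if_pos h1, if_pos (by tauto)]
    · rw [if_neg h1, if_neg (by tauto)]
  loopless := by
    intro v
    try dsimp only
    have h : ¬((v = x ∧ v = y) ∨ (v = y ∧ v = x)) := by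
      rintro (⟨rfl, rfl⟩ | ⟨rfl, rfl⟩) <;> exact hxy rfl
    simp [h, G.loopless]

/-- `aK₂`: two vertices joined by `a` parallel edges. -/
def kTwo (a : ℕ) : Multigraph (Fin 2) where
  mult u v := if u = v then 0 else a
  symm := by
    intro u v
    try dsimp only
    by_cases h : u = v
    · subst h; rfl
    · rw [if_neg h, if_neg (Ne.symm h)]
  loopless := by intro v; simp

def triMult (a b c : ℕ) : ℕ → ℕ → ℕ
  | 0, 1 => a | 1, 0 => a
  | 0, 2 => b | 2, 0 => b
  | 1, 2 => c | 2, 1 => c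
  | _, _ => 0

/-- `T_{a,b,c}`: three vertices, the three pairs joined by `a`, `b`, `c` parallel edges. -/
def triangle (a b c : ℕ) : Multigraph (Fin 3) where
  mult u v := triMult a b c u.val v.val
  symm := by intro u v; fin_cases u <;> fin_cases v <;> rfl
  loopless := by intro v; fin_cases v <;> rfl

def w1Mult : ℕ → ℕ → ℕ
  | 0, 1 => 1 | 1, 0 => 1 | 0, 2 => 1 | 2, 0 => 1 | 1, 2 => 1 | 2, 1 => 1
  | 0, 3 => 3 | 3, 0 => 3 | 1, 3 => 3 | 3, 1 => 3 | 2, 3 => 3 | 3, 2 => 3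
  | _, _ => 0

/-- The 4-vertex, 12-edge planar multigraph `W₁`: a triangle of single edges whose
three vertices are each joined to a central vertex by triple edges. -/
def W1 : Multigraph (Fin 4) where
  mult u v := w1Mult u.val v.val
  symm := by decide
  loopless := by decide

def w2Mult : ℕ → ℕ → ℕ
  | 0, 1 => 3 | 1, 0 => 3
  | 0, 2 => 2 | 2, 0 => 2 | 0, 3 => 2 | 3, 0 => 2
  | 1, 2 => 2 | 2, 1 => 2 | 1, 3 => 2 | 3, 1 => 2
  | 2, 3 => 1 | 3, 2 => 1
  | _, _ => 0

/-- The 4-vertex, 12-edge planar multigraph `W₂`. -/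
def W2 : Multigraph (Fin 4) where
  mult u v := w2Mult u.val v.val
  symm := by decide
  loopless := by decide

def q4Mult (a1 a2 a3 a4 : ℕ) : ℕ → ℕ → ℕ
  | 0, 1 => a1 | 1, 0 => a1
  | 1, 2 => a2 | 2, 1 => a2
  | 2, 3 => a3 | 3, 2 => a3
  | 3, 0 => a4 | 0, 3 => a4
  | _, _ => 0

/-- `Q_{a₁,a₂,a₃,a₄}`: the 4-cycle with edge multiplicities `a₁,…,a₄`. -/
def Q4 (a1 a2 a3 a4 : ℕ) : Multigraph (Fin 4) where
  mult u v := q4Mult a1 a2 a3 a4 u.val v.val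
  symm := by intro u v; fin_cases u <;> fin_cases v <;> rfl
  loopless := by intro v; fin_cases v <;> rfl

/-- Membership (up to isomorphism) in `𝒩₅ = {2K₂, 3K₂, T₁,₃,₃, T₂,₂,₃, W₁, W₂}`. -/
def InN5 (G : Multigraph V) : Prop :=
  G.Iso (kTwo 2) ∨ G.Iso (kTwo 3) ∨ G.Iso (triangle 1 3 3) ∨
    G.Iso (triangle 2 2 3) ∨ G.Iso W1 ∨ G.Iso W2

/-- `𝒮₅`-contractibility: `G` is connected, `w(G) ≥ 0` (every partition with at least
two parts has nonnegative weight), and no contraction of `G` lies in `𝒩₅`. -/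
def S5Contractible (G : Multigraph V) [Fintype V] [DecidableEq V] : Prop :=
  G.Connected ∧
    (∀ P : Finpartition (univ : Finset V), 2 ≤ P.parts.card → 0 ≤ G.pweight P) ∧
    (∀ P : Finpartition (univ : Finset V), ¬ InN5 (G.contract P))

/-- Strong `ℤ_ℓ`-connectivity: every zero-sum boundary `β` admits a `β`-orientation.
An orientation is encoded as `o : V → V → ℕ` where `o u v` is the number of the
`G.mult u v` parallel edges between `u` and `v` that are oriented from `u` to `v`. -/
def StronglyZConnected (G : Multigraph V) [Fintype V] (l : ℕ) : Prop :=
  ∀ β : V → ZMod l, ∑ v, β v = 0 →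
    ∃ o : V → V → ℕ, (∀ u v, o u v + o v u = G.mult u v) ∧
      ∀ v, (∑ u, (o v u : ZMod l)) - (∑ u, (o u v : ZMod l)) = β v

end Multigraph

open Multigraph

/-!
A partition of the three vertices into at least two parts is either the discrete one, of weight
`2(a + b + c) − 14`, or `{{v}ᶜ, {v}}`, of weight `2 deg v − 4`. The second exceeds the first by
`10 − 2m`, where `m` is the multiplicity of the edge opposite `v`, and `m ≤ 5`.
-/

namespace Finpartition

variable {α : Type*} [DecidableEq α]

theorem parts_eq_bot_of_card_parts_eq {s : Finset α} (P : Finpartition s)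
    (h : #P.parts = #s) : P.parts = (⊥ : Finpartition s).parts := by
  have hcard : ∀ A ∈ P.parts, #A = 1 := by
    refine fun A hA => ((sum_eq_sum_iff_of_le (f := fun _ => 1) (g := card)
      fun A hA => (P.nonempty_of_mem_parts hA).card_pos).mp ?_ A hA).symm
    rw [P.sum_card_parts, sum_const, smul_eq_mul, mul_one, h]
  refine eq_of_subset_of_card_le (fun A hA => ?_) (by rw [card_bot, h])
  obtain ⟨a, rfl⟩ := card_eq_one.mp (hcard A hA)
  exact mem_bot_iff.mpr ⟨a, P.le hA (mem_singleton_self a), rfl⟩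

theorem exists_parts_eq_pair_compl [Fintype α] (P : Finpartition (univ : Finset α))
    (h : #P.parts = 2) : ∃ X ∈ P.parts, P.parts = {X, Xᶜ} := by
  obtain ⟨X, Y, hXY, hP⟩ := card_eq_two.mp h
  have hX : X ∈ P.parts := hP ▸ mem_insert_self X {Y}
  have hY : Y ∈ P.parts := hP ▸ mem_insert_of_mem (mem_singleton_self Y)
  have hsup : X ⊔ Y = ⊤ := by
    simpa [hP, top_eq_univ] using P.sup_parts
  have hcompl : IsCompl X Y := ⟨P.disjoint hX hY hXY, codisjoint_iff.mpr hsup⟩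
  exact ⟨X, hX, by rw [hP, hcompl.compl_eq]⟩

end Finpartition

namespace Multigraph

variable {V : Type*} [Fintype V] [DecidableEq V] (G : Multigraph V)

theorem cut_compl (X : Finset V) : G.cut Xᶜ = G.cut X := by
  rw [cut, compl_compl, cut, sum_comm]
  simp_rw [G.symm]

theorem cut_singleton (v : V) : G.cut {v} = G.degree v := by
  rw [cut, sum_singleton, degree, ← sum_compl_add_sum {v}, sum_singleton, G.loopless, add_zero]

theorem exists_cut_eq_degree (hV : Fintype.card V ≤ 3) {X : Finset V} (hX : X.Nonempty)
    (hXc : Xᶜ.Nonempty) : ∃ v, G.cut X = G.degree v := by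
  have := card_compl X
  have := hX.card_pos
  have := hXc.card_pos
  rcases (by omega : #X = 1 ∨ #Xᶜ = 1) with h | h
  · obtain ⟨v, rfl⟩ := card_eq_one.mp h
    exact ⟨v, G.cut_singleton v⟩
  · obtain ⟨v, hv⟩ := card_eq_one.mp h
    exact ⟨v, by rw [← G.cut_compl, hv, cut_singleton]⟩

theorem pweight_bot :
    G.pweight ⊥ = ∑ v, (G.degree v : ℤ) - 10 * Fintype.card V + 16 := by
  simp [pweight, partsWeight, cut_singleton]

theorem partsWeight_pair_compl {X : Finset V} (hX : X ≠ Xᶜ) :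
    G.partsWeight {X, Xᶜ} = 2 * G.cut X - 4 := by
  rw [partsWeight, sum_pair hX, card_pair hX, cut_compl]
  push_cast
  ring

theorem triangle_pweight_bot (a b c : ℕ) :
    (triangle a b c).pweight ⊥ = 2 * ((a : ℤ) + b + c) - 14 := by
  simp [pweight_bot, degree, Fin.sum_univ_three, triangle, triMult]
  ring

theorem triangle_add_add_le_degree_add_five {a b c : ℕ} (ha : a ≤ 5) (hb : b ≤ 5) (hc : c ≤ 5)
    (v : Fin 3) : a + b + c ≤ (triangle a b c).degree v + 5 := by
  fin_cases v <;> simp [degree, Fin.sum_univ_three, triangle, triMult] <;> omega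

end Multigraph

/-- for `0 ≤ a, b, c ≤ 5`, `w(T_{a,b,c}) = 2(a+b+c) − 14`. -/
theorem weight_triangle (a b c : ℕ) (ha : a ≤ 5) (hb : b ≤ 5) (hc : c ≤ 5) :
    IsLeast {x : ℤ | ∃ P : Finpartition (univ : Finset (Fin 3)),
      2 ≤ P.parts.card ∧ x = (triangle a b c).pweight P}
      (2 * ((a : ℤ) + b + c) - 14) := by
  refine ⟨⟨⊥, by simp, (triangle_pweight_bot a b c).symm⟩, ?_⟩
  rintro _ ⟨P, hP, rfl⟩
  have hle : #P.parts ≤ 3 := by simpa using P.card_parts_le_card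
  rcases (by omega : #P.parts = 2 ∨ #P.parts = 3) with h2 | h3
  · obtain ⟨X, hX, hPX⟩ := P.exists_parts_eq_pair_compl h2
    have hXc : Xᶜ ∈ P.parts := hPX ▸ mem_insert_of_mem (mem_singleton_self _)
    have hne : X ≠ Xᶜ := fun h => by
      rw [hPX, ← h, insert_eq_of_mem (mem_singleton_self X), card_singleton] at h2
      omega
    obtain ⟨v, hv⟩ := (triangle a b c).exists_cut_eq_degree (by simp)
      (P.nonempty_of_mem_parts hX) (P.nonempty_of_mem_parts hXc)
    have := triangle_add_add_le_degree_add_five ha hb hc v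
    rw [pweight, hPX, partsWeight_pair_compl _ hne, hv]
    omega
  · rw [pweight, P.parts_eq_bot_of_card_parts_eq (by simpa using h3), ← pweight,
      triangle_pweight_bot]
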